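/- Let f : ℝⁿ → ℝⁿ and g : ℝⁿ → ℝⁿˣᵐ be continuous, h : ℝⁿ → ℝ be continuously differentiable, α be an extended class K∞ function, ε : ℝ → ℝ_{>0} be continuous, and k_n : ℝⁿ → ℝᵐ be continuous. Suppose h is an ISSf-CBF: for all x, sup_{u} [L_f h(x) + L_g h(x) u] > −α(h(x)) + ‖L_g h(x)‖₂²/ε(h(x)). Define η̄(x) = −(L_f h(x) + L_g h(x) k_n(x) + α(h(x)))/‖L_g h(x)‖₂² + 1/ε(h(x)) if L_g h(x) ≠ 0 and η̄(x) = 0 if L_g h(x) = 0, and k̄_QP(x) = k_n(x) + max{0, η̄(x)} L_g h(x)ᵀ. Then (i) for every x ∈ ℝⁿ, k̄_QP(x) ∈ K_ISSf(x), i.e., L_f h(x) + L_g h(x) k̄_QP(x) ≥ −α(h(x)) + ‖L_g h(x)‖₂²/ε(h(x)); (ii) for each x with L_g h(x) ≠ 0, k̄_QP(x) is the unique minimizer of ½‖u − k_n(x)‖₂² over K_ISSf(x); and (iii) k̄_QP is continuous. -/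

import Mathlib

/-!
`k̄_QP(x)` is the Euclidean projection of `k_n(x)` onto the half-space
`K_ISSf(x) = {u | c(x) ≤ L_g h(x) u}`, `c(x) = -α(h(x)) + ‖L_g h(x)‖² / ε(h(x)) - L_f h(x)`,
written in closed form. For every feasible `u` the projection satisfies the Pythagorean inequality
`‖u - k̄‖² + ‖k̄ - k_n‖² ≤ ‖u - k_n‖²`, which gives minimality and uniqueness. Continuity is only
delicate where `L_g h(x) = 0`; there the ISSf condition says `c(x) < 0`, so the constraint is
strictly slack at `k_n` nearby and `k̄_QP = k_n` on a neighbourhood.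
-/

open RealInnerProductSpace

/-- An extended class K∞ function: continuous, strictly increasing, zero at zero,
tending to `∞` at `∞` and to `-∞` at `-∞`. -/
structure ClassKInfE (α : ℝ → ℝ) : Prop where
  continuous : Continuous α
  strictMono : StrictMono α
  map_zero : α 0 = 0
  tendsto_atTop : Filter.Tendsto α Filter.atTop Filter.atTop
  tendsto_atBot : Filter.Tendsto α Filter.atBot Filter.atBot

/-- Lie derivative of `h` along the vector field `f`: `L_f h(x) = (∂h/∂x)(x) f(x)`. -/
noncomputable def LieF {n : ℕ} (h : EuclideanSpace ℝ (Fin n) → ℝ)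
    (f : EuclideanSpace ℝ (Fin n) → EuclideanSpace ℝ (Fin n))
    (x : EuclideanSpace ℝ (Fin n)) : ℝ :=
  fderiv ℝ h x (f x)

/-- Lie derivative of `h` along the input matrix `g`:
`L_g h(x) = (∂h/∂x)(x) g(x) ∈ ℝ^{1×m}`, viewed as a linear functional on `ℝᵐ`. -/
noncomputable def LieG {n m : ℕ} (h : EuclideanSpace ℝ (Fin n) → ℝ)
    (g : EuclideanSpace ℝ (Fin n) → (EuclideanSpace ℝ (Fin m) →L[ℝ] EuclideanSpace ℝ (Fin n)))
    (x : EuclideanSpace ℝ (Fin n)) : EuclideanSpace ℝ (Fin m) →L[ℝ] ℝ :=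
  (fderiv ℝ h x).comp (g x)

open Classical

open InnerProductSpace

/-- The projection of `k` onto `{u | c ≤ ℓ u}`; for `ℓ = 0` division by zero makes it `k`. -/
noncomputable def halfspaceProj {E : Type*} [NormedAddCommGroup E] [InnerProductSpace ℝ E]
    [CompleteSpace E] (ℓ : E →L[ℝ] ℝ) (c : ℝ) (k : E) : E :=
  k + max 0 ((c - ℓ k) / ‖ℓ‖ ^ 2) • (toDual ℝ E).symm ℓ

section HalfspaceProj

variable {E : Type*} [NormedAddCommGroup E] [InnerProductSpace ℝ E] [CompleteSpace E]
  {ℓ : E →L[ℝ] ℝ} {c : ℝ} {k u : E}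

@[simp]
theorem halfspaceProj_zero_left : halfspaceProj 0 c k = k := by
  simp [halfspaceProj]

theorem apply_toDual_symm_self (ℓ : E →L[ℝ] ℝ) : ℓ ((toDual ℝ E).symm ℓ) = ‖ℓ‖ ^ 2 := by
  rw [← toDual_symm_apply, real_inner_self_eq_norm_sq, LinearIsometryEquiv.norm_map]

theorem apply_halfspaceProj_of_ne_zero (hℓ : ℓ ≠ 0) :
    ℓ (halfspaceProj ℓ c k) = max (ℓ k) c := by
  have hN : (0 : ℝ) < ‖ℓ‖ ^ 2 := by positivity
  rw [halfspaceProj, map_add, map_smul, apply_toDual_symm_self, smul_eq_mul,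
    max_mul_of_nonneg _ _ hN.le, zero_mul, div_mul_cancel₀ _ hN.ne', ← max_add_add_left]
  simp

theorem le_apply_halfspaceProj (hfeas : ∃ u, c ≤ ℓ u) : c ≤ ℓ (halfspaceProj ℓ c k) := by
  rcases eq_or_ne ℓ 0 with rfl | hℓ
  · simpa using hfeas
  · exact (apply_halfspaceProj_of_ne_zero hℓ).symm ▸ le_max_right _ _

theorem norm_sub_halfspaceProj_sq_add_le (hu : c ≤ ℓ u) :
    ‖u - halfspaceProj ℓ c k‖ ^ 2 + ‖halfspaceProj ℓ c k - k‖ ^ 2 ≤ ‖u - k‖ ^ 2 := by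
  rcases eq_or_ne ℓ 0 with rfl | hℓ
  · simp
  set t := max 0 ((c - ℓ k) / ‖ℓ‖ ^ 2)
  set p := halfspaceProj ℓ c k
  have hstep : p - k = t • (toDual ℝ E).symm ℓ := add_sub_cancel_left _ _
  -- complementary slackness: the step is nonzero only if the constraint is active at `p`
  have hslack : 0 ≤ t * ℓ (u - p) := by
    rw [map_sub, apply_halfspaceProj_of_ne_zero hℓ]
    rcases le_total c (ℓ k) with hck | hck
    · have : t = 0 := max_eq_left (div_nonpos_of_nonpos_of_nonneg (by linarith) (by positivity))
      simp [this]
    · rw [max_eq_right hck]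
      exact mul_nonneg (le_max_left _ _) (by linarith)
  have hinner : ⟪u - p, p - k⟫_ℝ = t * ℓ (u - p) := by
    rw [hstep, real_inner_smul_right, real_inner_comm, toDual_symm_apply]
  have hexpand : ‖u - k‖ ^ 2 = ‖u - p‖ ^ 2 + 2 * (t * ℓ (u - p)) + ‖p - k‖ ^ 2 := by
    rw [← hinner, ← norm_add_sq_real, sub_add_sub_cancel]
  linarith

theorem norm_halfspaceProj_sub_le (hu : c ≤ ℓ u) : ‖halfspaceProj ℓ c k - k‖ ≤ ‖u - k‖ := by
  have := norm_sub_halfspaceProj_sq_add_le (k := k) hu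
  exact pow_le_pow_iff_left₀ (norm_nonneg _) (norm_nonneg _) two_ne_zero |>.mp
    (by nlinarith [sq_nonneg ‖u - halfspaceProj ℓ c k‖])

theorem eq_halfspaceProj_of_norm_sub_eq (hu : c ≤ ℓ u)
    (heq : ‖u - k‖ = ‖halfspaceProj ℓ c k - k‖) : u = halfspaceProj ℓ c k := by
  have := norm_sub_halfspaceProj_sq_add_le (k := k) hu
  rw [heq] at this
  exact sub_eq_zero.mp <| norm_eq_zero.mp <| pow_eq_zero_iff two_ne_zero |>.mp <|
    le_antisymm (by linarith) (by positivity)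

theorem Continuous.halfspaceProj {X : Type*} [TopologicalSpace X] {ℓ : X → E →L[ℝ] ℝ}
    {c : X → ℝ} {k : X → E} (hℓ : Continuous ℓ) (hc : Continuous c) (hk : Continuous k)
    (hslater : ∀ x, ∃ u, c x < ℓ x u) :
    Continuous fun x => halfspaceProj (ℓ x) (c x) (k x) := by
  have hnum : Continuous fun x => c x - ℓ x (k x) := hc.sub (hℓ.clm_apply hk)
  have hstep : Continuous fun x => max 0 ((c x - ℓ x (k x)) / ‖ℓ x‖ ^ 2) := by
    refine continuous_iff_continuousAt.mpr fun x₀ => ?_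
    rcases eq_or_ne (ℓ x₀) 0 with hx₀ | hx₀
    · obtain ⟨u, hu⟩ := hslater x₀
      have hneg : c x₀ - ℓ x₀ (k x₀) < 0 := by simpa [hx₀] using hu
      refine (continuousAt_const (y := (0 : ℝ))).congr ?_
      filter_upwards [hnum.continuousAt.eventually (gt_mem_nhds hneg)] with x hx
      exact (max_eq_left (div_nonpos_of_nonpos_of_nonneg hx.le (by positivity))).symm
    · exact continuousAt_const.max <| hnum.continuousAt.div (hℓ.norm.pow 2).continuousAt
        (by positivity)
  exact hk.add <| hstep.smul <| (toDual ℝ E).symm.continuous.comp hℓ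

end HalfspaceProj

theorem continuous_LieF {n : ℕ} {h : EuclideanSpace ℝ (Fin n) → ℝ}
    {f : EuclideanSpace ℝ (Fin n) → EuclideanSpace ℝ (Fin n)} (hh : ContDiff ℝ 1 h)
    (hf : Continuous f) : Continuous (LieF h f) :=
  (hh.continuous_fderiv one_ne_zero).clm_apply hf

theorem continuous_LieG {n m : ℕ} {h : EuclideanSpace ℝ (Fin n) → ℝ}
    {g : EuclideanSpace ℝ (Fin n) → (EuclideanSpace ℝ (Fin m) →L[ℝ] EuclideanSpace ℝ (Fin n))}
    (hh : ContDiff ℝ 1 h) (hg : Continuous g) : Continuous (LieG h g) :=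
  (hh.continuous_fderiv one_ne_zero).clm_comp hg

/-- the robust QP controller `k̄_QP` (i) satisfies the ISSf constraint
everywhere, (ii) is the unique minimizer of `½‖u − k_n(x)‖²` over `K_ISSf(x)` wherever
`L_g h(x) ≠ 0`, and (iii) is continuous. -/
theorem robust_kQP_properties {n m : ℕ}
    (f : EuclideanSpace ℝ (Fin n) → EuclideanSpace ℝ (Fin n))
    (g : EuclideanSpace ℝ (Fin n) → (EuclideanSpace ℝ (Fin m) →L[ℝ] EuclideanSpace ℝ (Fin n)))
    (h : EuclideanSpace ℝ (Fin n) → ℝ) (α ε : ℝ → ℝ)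
    (hf : Continuous f) (hg : Continuous g) (hh : ContDiff ℝ 1 h) (hα : ClassKInfE α)
    (hεpos : ∀ r : ℝ, 0 < ε r) (hεcont : Continuous ε)
    (kn : EuclideanSpace ℝ (Fin n) → EuclideanSpace ℝ (Fin m)) (hkn : Continuous kn)
    (hissf : ∀ x : EuclideanSpace ℝ (Fin n), ∃ u : EuclideanSpace ℝ (Fin m),
      LieF h f x + LieG h g x u > -α (h x) + ‖LieG h g x‖ ^ 2 / ε (h x))
    (ηbar : EuclideanSpace ℝ (Fin n) → ℝ)
    (hηbar : ∀ x, ηbar x = if LieG h g x = 0 then 0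
      else -(LieF h f x + LieG h g x (kn x) + α (h x)) / ‖LieG h g x‖ ^ 2
        + 1 / ε (h x))
    (kbarQP : EuclideanSpace ℝ (Fin n) → EuclideanSpace ℝ (Fin m))
    (hkbarQP : ∀ x, kbarQP x = kn x + max 0 (ηbar x) •
      (InnerProductSpace.toDual ℝ (EuclideanSpace ℝ (Fin m))).symm (LieG h g x)) :
    (∀ x : EuclideanSpace ℝ (Fin n),
      LieF h f x + LieG h g x (kbarQP x) ≥ -α (h x) + ‖LieG h g x‖ ^ 2 / ε (h x)) ∧
    (∀ x : EuclideanSpace ℝ (Fin n), LieG h g x ≠ 0 →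
      ∀ u : EuclideanSpace ℝ (Fin m),
        LieF h f x + LieG h g x u ≥ -α (h x) + ‖LieG h g x‖ ^ 2 / ε (h x) →
          ‖kbarQP x - kn x‖ ≤ ‖u - kn x‖ ∧
          (‖u - kn x‖ = ‖kbarQP x - kn x‖ → u = kbarQP x)) ∧
    Continuous kbarQP := by
  set c := fun x => -α (h x) + ‖LieG h g x‖ ^ 2 / ε (h x) - LieF h f x
  have hconstraint : ∀ x u, LieF h f x + LieG h g x u ≥ -α (h x) + ‖LieG h g x‖ ^ 2 / ε (h x) ↔
      c x ≤ LieG h g x u := fun x u => by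
    constructor <;> intro <;> simp only [c] at * <;> linarith
  have hkbar : ∀ x, kbarQP x = halfspaceProj (LieG h g x) (c x) (kn x) := by
    intro x
    have hη : ηbar x = (c x - LieG h g x (kn x)) / ‖LieG h g x‖ ^ 2 := by
      rw [hηbar]
      split_ifs with hℓ
      · simp [hℓ]
      · have : ‖LieG h g x‖ ≠ 0 := norm_ne_zero_iff.mpr hℓ
        field_simp
        ring
    rw [hkbarQP, hη, halfspaceProj]
  have hslater : ∀ x, ∃ u, c x < LieG h g x u := fun x => by
    obtain ⟨u, hu⟩ := hissf x
    exact ⟨u, by simp only [c]; linarith⟩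
  have hc : Continuous c :=
    ((hα.continuous.comp hh.continuous).neg.add <| (continuous_LieG hh hg).norm.pow 2 |>.div
      (hεcont.comp hh.continuous) fun x => (hεpos (h x)).ne').sub (continuous_LieF hh hf)
  refine ⟨fun x => ?_, fun x _ u hu => ?_, ?_⟩
  · rw [hconstraint, hkbar]
    exact le_apply_halfspaceProj ((hslater x).imp fun _ => le_of_lt)
  · rw [hconstraint] at hu
    rw [hkbar]
    exact ⟨norm_halfspaceProj_sub_le hu, eq_halfspaceProj_of_norm_sub_eq hu⟩
  · rw [funext hkbar]
    exact (continuous_LieG hh hg).halfspaceProj hc hkn hslater
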